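/- Characterisation of independence via projection formulae: W ⊆ 𝓢 is independent in φ if and only if every trace α that models φ′_W ∧ φ′_{𝓢∖W} satisfies α↾𝓢 ∈ Σ_φ. -/
import Mathlib


open Classical

/-- Syntax of LTL formulae over variable type `V`. -/
inductive LTL (V : Type) : Type
  | tt : LTL V
  | var : V → LTL V
  | neg : LTL V → LTL V
  | conj : LTL V → LTL V → LTL V
  | next : LTL V → LTL V
  | untl : LTL V → LTL V → LTL V

namespace LTL

def rename {V : Type} (f : V → V) : LTL V → LTL V
  | tt => tt
  | var v => var (f v)
  | neg φ => neg (rename f φ)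
  | conj φ ψ => conj (rename f φ) (rename f ψ)
  | next φ => next (rename f φ)
  | untl φ ψ => untl (rename f φ) (rename f ψ)

def vars {V : Type} : LTL V → Set V
  | tt => ∅
  | var v => {v}
  | neg φ => vars φ
  | conj φ ψ => vars φ ∪ vars ψ
  | next φ => vars φ
  | untl φ ψ => vars φ ∪ vars ψ

/-- The "always" operator, defined from until. -/
def box {V : Type} (φ : LTL V) : LTL V := neg (untl tt (neg φ))

end LTL

/-- An (infinite) trace: each state is a set of variables (those true there). -/
abbrev Trace (V : Type) := ℕ → Set V

def Trace.shift {V : Type} (α : Trace V) (k : ℕ) : Trace V := fun i => α (i + k)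

/-- Standard LTL satisfaction. -/
def Sat {V : Type} (α : Trace V) : LTL V → Prop
  | .tt => True
  | .var v => v ∈ α 0
  | .neg φ => ¬ Sat α φ
  | .conj φ ψ => Sat α φ ∧ Sat α ψ
  | .next φ => Sat (α.shift 1) φ
  | .untl φ ψ => ∃ k, Sat (α.shift k) ψ ∧ ∀ j < k, Sat (α.shift j) φ

/-- The projection formula `φ′_W`: rename every variable in `W` to its primed copy. -/
noncomputable def projFormula {V : Type} (prime : V → V) (W : Set V) (φ : LTL V) : LTL V :=
  φ.rename (fun v => if v ∈ W then prime v else v)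

/-- Projection of a trace over `E ∪ W`: keep environment variables and variables in `W`. -/
def projT {V : Type} (E W : Set V) (α : Trace V) : Trace V :=
  fun i => (α i ∩ E) ∪ (α i ∩ W)

/-- Projection of a set of traces. -/
def projS {V : Type} (E W : Set V) (Sig : Set (Trace V)) : Set (Trace V) :=
  (projT E W) '' Sig

/-- Natural join of two sets of traces over `E ∪ W₁` and `E ∪ W₂`:
traces over `E ∪ W₁ ∪ W₂` whose projections lie in the respective sets. -/
def Join {V : Type} (E W₁ W₂ : Set V) (S₁ S₂ : Set (Trace V)) : Set (Trace V) :=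
  {α | (∀ i, α i ⊆ E ∪ W₁ ∪ W₂) ∧ projT E W₁ α ∈ S₁ ∧ projT E W₂ α ∈ S₂}

/-- A set of traces is "over `E ∪ W`" if every state of every trace only uses those variables. -/
def TracesOver {V : Type} (E W : Set V) (Sig : Set (Trace V)) : Prop :=
  ∀ α ∈ Sig, ∀ i, α i ⊆ E ∪ W

/-- `Σ_φ`: the set of traces over `E ∪ S` that model `φ`. -/
def ModelsOver {V : Type} (E S : Set V) (φ : LTL V) : Set (Trace V) :=
  {α | Sat α φ ∧ ∀ i, α i ⊆ E ∪ S}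

/-- `W ⊆ S` is independent in `φ`:  `(Σ_φ ↾ W) ⋈ (Σ_φ ↾ (S \ W)) = Σ_φ`. -/
def Indep {V : Type} (E S : Set V) (φ : LTL V) (W : Set V) : Prop :=
  Join E W (S \ W) (projS E W (ModelsOver E S φ)) (projS E (S \ W) (ModelsOver E S φ))
    = ModelsOver E S φ

/-- A literal: a variable together with a polarity. -/
def LTL.lit {V : Type} (p : V × Bool) : LTL V :=
  if p.2 then LTL.var p.1 else LTL.neg (LTL.var p.1)

/-- Conjunction of a list of formulae. -/
def LTL.bigConj {V : Type} (l : List (LTL V)) : LTL V :=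
  l.foldr LTL.conj LTL.tt

private lemma sat_rename {V : Type} (f : V → V) (φ : LTL V) :
    ∀ α : Trace V, Sat α (φ.rename f) ↔ Sat (fun i => {v | f v ∈ α i}) φ := by
  induction φ with
  | tt => intro α; simp [LTL.rename, Sat]
  | var v => intro α; simp only [LTL.rename, Sat]; rfl
  | neg φ ih => intro α; simp only [LTL.rename, Sat]; rw [ih α]
  | conj φ ψ ih1 ih2 => intro α; simp only [LTL.rename, Sat]; rw [ih1 α, ih2 α]
  | next φ ih => intro α; simp only [LTL.rename, Sat]; exact ih (α.shift 1)
  | untl φ ψ ih1 ih2 =>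
      intro α; simp only [LTL.rename, Sat]
      exact exists_congr fun k =>
        and_congr (ih2 (α.shift k)) (forall_congr' fun j =>
          forall_congr' fun _ => ih1 (α.shift j))

private lemma sat_congr {V : Type} (φ : LTL V) :
    ∀ α β : Trace V, (∀ v ∈ φ.vars, ∀ i, (v ∈ α i ↔ v ∈ β i)) →
    (Sat α φ ↔ Sat β φ) := by
  induction φ with
  | tt => intros; simp [Sat]
  | var v => intro α β h; simpa [Sat] using h v (by simp [LTL.vars]) 0
  | neg φ ih => intro α β h; simp only [Sat]; rw [ih α β h]
  | conj φ ψ ih1 ih2 =>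
      intro α β h; simp only [Sat]
      rw [ih1 α β (fun v hv => h v (Set.mem_union_left _ hv)),
        ih2 α β (fun v hv => h v (Set.mem_union_right _ hv))]
  | next φ ih =>
      intro α β h; simp only [Sat]
      exact ih (α.shift 1) (β.shift 1) (fun v hv i => h v hv (i + 1))
  | untl φ ψ ih1 ih2 =>
      intro α β h; simp only [Sat]
      exact exists_congr fun k =>
        and_congr
          (ih2 (α.shift k) (β.shift k)
            (fun v hv i => h v (Set.mem_union_right _ hv) (i + k)))
          (forall_congr' fun j => forall_congr' fun _ =>
            ih1 (α.shift j) (β.shift j)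
              (fun v hv i => h v (Set.mem_union_left _ hv) (i + j)))

/-- From a model of the projection formula `φ′_U` one can extract a model of `φ`
that reads `U`-variables from the primed copies and the rest unprimed. -/
private lemma extract_model {V : Type} (En Sy : Set V) (prime : V → V) (φ : LTL V)
    (hvars : φ.vars ⊆ En ∪ Sy) (U : Set V)
    (α : Trace V) (h : Sat α (projFormula prime U φ)) :
    Sat (fun i => (α i ∩ ((En ∪ Sy) \ U)) ∪ {v | v ∈ U ∧ prime v ∈ α i}) φ := by
  rw [projFormula, sat_rename] at h
  refine (sat_congr φ _ _ ?_).mp h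
  intro v hv i
  have hv' := hvars hv
  by_cases hvU : v ∈ U <;>
    simp only [Set.mem_setOf_eq, Set.mem_union, Set.mem_inter_iff, Set.mem_diff,
      hvU, if_pos, if_neg, if_true, if_false] <;> tauto

set_option maxHeartbeats 2000000 in
/-- `W` is independent in `φ` iff every trace modeling
`φ′_W ∧ φ′_{S∖W}` projects (onto `S`) to a model of `φ`. -/
theorem stmt13 {V : Type} (En Sy : Set V) (hdis : Disjoint En Sy)
    (prime : V → V) (hinj : Function.Injective prime)
    (hfresh : ∀ v, prime v ∉ En ∪ Sy)
    (φ : LTL V) (hvars : φ.vars ⊆ En ∪ Sy)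
    (W : Set V) (hW : W ⊆ Sy) :
    Indep En Sy φ W ↔
      ∀ α : Trace V,
        Sat α ((projFormula prime W φ).conj (projFormula prime (Sy \ W) φ)) →
        projT En Sy α ∈ ModelsOver En Sy φ := by
  have hd : ∀ v, v ∈ En → v ∉ Sy := fun v hv => Set.disjoint_left.mp hdis hv
  constructor
  · -- Indep → projection property
    intro hind α hα
    obtain ⟨h1, h2⟩ : Sat α (projFormula prime W φ) ∧ Sat α (projFormula prime (Sy \ W) φ) := hα
    have hg1 := extract_model En Sy prime φ hvars W α h1
    have hg2 := extract_model En Sy prime φ hvars (Sy \ W) α h2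
    rw [← hind]
    refine ⟨?_, ⟨_, ⟨hg2, ?_⟩, ?_⟩, ⟨_, ⟨hg1, ?_⟩, ?_⟩⟩
    · intro i v hv
      simp only [projT, Set.mem_union, Set.mem_inter_iff] at hv ⊢
      by_cases hvW : v ∈ W <;> tauto
    · intro i v hv
      simp only [Set.mem_union, Set.mem_inter_iff, Set.mem_diff, Set.mem_setOf_eq] at hv ⊢
      tauto
    · funext i
      ext v
      have hd' := hd v
      have hW' := @hW v
      simp only [projT, Set.mem_union, Set.mem_inter_iff, Set.mem_diff, Set.mem_setOf_eq]
      tauto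
    · intro i v hv
      simp only [Set.mem_union, Set.mem_inter_iff, Set.mem_diff, Set.mem_setOf_eq] at hv ⊢
      have hW' := @hW v
      tauto
    · funext i
      ext v
      have hd' := hd v
      have hW' := @hW v
      simp only [projT, Set.mem_union, Set.mem_inter_iff, Set.mem_diff, Set.mem_setOf_eq]
      tauto
  · -- projection property → Indep
    intro hproj
    apply Set.eq_of_subset_of_subset
    · rintro β ⟨hsub, ⟨γ₁, hγ₁, hp1⟩, ⟨γ₂, hγ₂, hp2⟩⟩
      obtain ⟨hs1, hb1⟩ : Sat γ₁ φ ∧ ∀ i, γ₁ i ⊆ En ∪ Sy := hγ₁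
      obtain ⟨hs2, hb2⟩ : Sat γ₂ φ ∧ ∀ i, γ₂ i ⊆ En ∪ Sy := hγ₂
      have hβb : ∀ i, β i ⊆ En ∪ Sy := by
        intro i v hv
        have := hsub i hv
        simp only [Set.mem_union, Set.mem_diff] at this ⊢
        have hW' := @hW v
        tauto
      -- pointwise consequences of the projection equalities
      have hp1' : ∀ i v, v ∈ En ∪ W → (v ∈ γ₁ i ↔ v ∈ β i) := by
        intro i v hv
        have := congrFun hp1 i
        have h1 := (Set.ext_iff.mp this v)
        simp only [projT, Set.mem_union, Set.mem_inter_iff] at h1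
        have hd' := hd v
        have hW' := @hW v
        simp only [Set.mem_union] at hv
        tauto
      have hp2' : ∀ i v, v ∈ En ∪ (Sy \ W) → (v ∈ γ₂ i ↔ v ∈ β i) := by
        intro i v hv
        have := congrFun hp2 i
        have h1 := (Set.ext_iff.mp this v)
        simp only [projT, Set.mem_union, Set.mem_inter_iff, Set.mem_diff] at h1
        have hd' := hd v
        simp only [Set.mem_union, Set.mem_diff] at hv
        tauto
      -- the combined primed trace
      set α : Trace V := fun i => β i ∪ prime '' ((γ₂ i ∩ W) ∪ (γ₁ i ∩ (Sy \ W))) with hα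
      have hmemim : ∀ i v, v ∈ En ∪ Sy → v ∉ prime '' ((γ₂ i ∩ W) ∪ (γ₁ i ∩ (Sy \ W))) := by
        rintro i v hv ⟨w, _, rfl⟩; exact hfresh w hv
      have hαsat : Sat α ((projFormula prime W φ).conj (projFormula prime (Sy \ W) φ)) := by
        constructor
        · rw [projFormula, sat_rename]
          refine (sat_congr φ _ _ ?_).mpr hs2
          intro v hv i
          have hv' := hvars hv
          by_cases hvW : v ∈ W
          · simp only [Set.mem_setOf_eq]
            rw [if_pos hvW]
            have hpβ : prime v ∉ β i := fun h => hfresh v (hβb i h)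
            have him : prime v ∈ prime '' ((γ₂ i ∩ W) ∪ (γ₁ i ∩ (Sy \ W))) ↔
                v ∈ (γ₂ i ∩ W) ∪ (γ₁ i ∩ (Sy \ W)) := hinj.mem_set_image
            simp only [hα, Set.mem_union, Set.mem_inter_iff, Set.mem_diff] at him ⊢
            tauto
          · simp only [Set.mem_setOf_eq]
            rw [if_neg hvW]
            have him := hmemim i v hv'
            have h2 := hp2' i v (by
              simp only [Set.mem_union, Set.mem_diff] at hv' ⊢; tauto)
            simp only [hα, Set.mem_union]
            tauto
        · rw [projFormula, sat_rename]
          refine (sat_congr φ _ _ ?_).mpr hs1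
          intro v hv i
          have hv' := hvars hv
          by_cases hvS : v ∈ Sy \ W
          · simp only [Set.mem_setOf_eq]
            rw [if_pos hvS]
            have hpβ : prime v ∉ β i := fun h => hfresh v (hβb i h)
            have him : prime v ∈ prime '' ((γ₂ i ∩ W) ∪ (γ₁ i ∩ (Sy \ W))) ↔
                v ∈ (γ₂ i ∩ W) ∪ (γ₁ i ∩ (Sy \ W)) := hinj.mem_set_image
            have hvW : v ∉ W := (Set.mem_diff v).mp hvS |>.2
            simp only [hα, Set.mem_union, Set.mem_inter_iff, Set.mem_diff] at him ⊢
            tauto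
          · simp only [Set.mem_setOf_eq]
            rw [if_neg hvS]
            have him := hmemim i v hv'
            have h1 := hp1' i v (by
              simp only [Set.mem_union, Set.mem_diff] at hv' hvS ⊢; tauto)
            simp only [hα, Set.mem_union]
            tauto
      have := hproj α hαsat
      have hβeq : projT En Sy α = β := by
        funext i
        ext v
        have him := hmemim i v
        have hβ' := @hβb i v
        simp only [projT, hα, Set.mem_union, Set.mem_inter_iff] at him hβ' ⊢
        tauto
      rwa [hβeq] at this
    · rintro β hβ
      have hb : ∀ i, β i ⊆ En ∪ Sy := hβ.2
      refine ⟨?_, ⟨β, hβ, rfl⟩, ⟨β, hβ, rfl⟩⟩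
      intro i v hv
      have := hb i hv
      simp only [Set.mem_union, Set.mem_diff] at this ⊢
      by_cases hvW : v ∈ W <;> tauto
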